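/- arXiv:2603.29575 — 6 statements merged into one kernel-verified Lean document; each statement's English description precedes it below -/
import Mathlib

section
/- Let ρ: ℝ → ℝ be convex and twice differentiable with ψ = ρ'. For fixed x ∈ ℝ and c > 0, the map c ↦ prox(cρ)(x) is differentiable with derivative ∂/∂c prox(cρ)(x) = −ψ(prox(cρ)(x)) / (1 + c·ψ'(prox(cρ)(x))). -/
/-!
Subtracting the equations `P c + c ψ(P c) = x` and `P c' + c' ψ(P c') = x` and writing
`ψ(P c') - ψ(P c) = (P c' - P c) · dslope ψ (P c) (P c')` gives
`(P c' - P c) (1 + c' · dslope ψ (P c) (P c')) = -(c' - c) ψ(P c)`.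
Convexity makes `ψ` monotone, so the second factor is at least `1`: this shows that `P` is
continuous at `c`, hence the second factor tends to `1 + c ψ'(P c)`, and dividing by
`c' - c` gives the derivative.
-/

open Filter Topology Set

theorem ConvexOn.monotone_of_hasDerivAt {ρ ψ : ℝ → ℝ} (hconv : ConvexOn ℝ univ ρ)
    (hρ : ∀ t, HasDerivAt ρ (ψ t) t) : Monotone ψ := by
  intro a b hab
  have h := hconv.monotoneOn_deriv (fun t _ => (hρ t).differentiableAt)
    (mem_univ a) (mem_univ b) hab
  rwa [(hρ a).deriv, (hρ b).deriv] at h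

theorem Monotone.dslope_nonneg {f : ℝ → ℝ} (hf : Monotone f) (a b : ℝ) : 0 ≤ dslope f a b := by
  rcases eq_or_ne b a with rfl | hba
  · exact dslope_same f b ▸ hf.deriv_nonneg
  · exact dslope_of_ne f hba ▸ (hf.monotoneOn univ).slope_nonneg (mem_univ a) (mem_univ b)

theorem sub_mul_one_add_mul_dslope_eq {ψ : ℝ → ℝ} {x c c' y y' : ℝ}
    (hy : y + c * ψ y = x) (hy' : y' + c' * ψ y' = x) :
    (y' - y) * (1 + c' * dslope ψ y y') = (c' - c) * -ψ y := by
  have hslope : (y' - y) * dslope ψ y y' = ψ y' - ψ y := sub_smul_dslope ψ y y'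
  linear_combination hy' - hy + c' * hslope

section Implicit

variable {P q : ℝ → ℝ} {c a : ℝ}

theorem continuousAt_of_eventually_sub_mul_eq (hq : ∀ᶠ c' in 𝓝 c, 1 ≤ q c')
    (h : ∀ᶠ c' in 𝓝 c, (P c' - P c) * q c' = (c' - c) * a) : ContinuousAt P c := by
  have hbound : ∀ᶠ c' in 𝓝 c, ‖P c' - P c‖ ≤ |c' - c| * |a| := by
    filter_upwards [hq, h] with c' hq' h'
    calc ‖P c' - P c‖ ≤ |P c' - P c| * |q c'| := by
          rw [Real.norm_eq_abs]
          exact le_mul_of_one_le_right (abs_nonneg _) (hq'.trans (le_abs_self _))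
      _ = |c' - c| * |a| := by rw [← abs_mul, h', abs_mul]
  have hlim : Tendsto (fun c' => |c' - c| * |a|) (𝓝 c) (𝓝 0) := by
    have hcont : Continuous fun c' => |c' - c| * |a| := by fun_prop
    simpa using hcont.tendsto c
  exact tendsto_iff_norm_sub_tendsto_zero.2 <|
    squeeze_zero' (Eventually.of_forall fun _ => norm_nonneg _) hbound hlim

theorem hasDerivAt_of_eventually_sub_mul_eq (hq : ContinuousAt q c) (hqc : q c ≠ 0)
    (h : ∀ᶠ c' in 𝓝 c, (P c' - P c) * q c' = (c' - c) * a) : HasDerivAt P (a / q c) c := by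
  rw [hasDerivAt_iff_tendsto_slope]
  have hslope : ∀ᶠ c' in 𝓝[≠] c, a / q c' = slope P c c' := by
    filter_upwards [nhdsWithin_le_nhds (h.and (hq.eventually_ne hqc)), self_mem_nhdsWithin]
      with c' ⟨h', hq'⟩ hne
    rw [slope_def_field, div_eq_div_iff hq' (sub_ne_zero.2 hne), h', mul_comm]
  exact ((tendsto_const_nhds.div hq hqc).mono_left nhdsWithin_le_nhds).congr' hslope

end Implicit

/-- Derivative of the proximal map `c ↦ prox(cρ)(x)`, where `prox(cρ)(x)` is the
unique solution `y` of `y + c·ψ(y) = x`. -/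
theorem stmt1 (ρ ψ ψd : ℝ → ℝ)
    (hconv : ConvexOn ℝ Set.univ ρ)
    (hρ : ∀ t, HasDerivAt ρ (ψ t) t)
    (hψ : ∀ t, HasDerivAt ψ (ψd t) t)
    (x : ℝ) (P : ℝ → ℝ)
    (hP : ∀ c : ℝ, 0 < c → P c + c * ψ (P c) = x) :
    ∀ c : ℝ, 0 < c →
      HasDerivAt P (-(ψ (P c)) / (1 + c * ψd (P c))) c := by
  intro c hc
  have hmono : Monotone ψ := hconv.monotone_of_hasDerivAt hρ
  set q : ℝ → ℝ := fun c' => 1 + c' * dslope ψ (P c) (P c')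
  have hpos : ∀ᶠ c' in 𝓝 c, 0 < c' := eventually_gt_nhds hc
  have hkey : ∀ᶠ c' in 𝓝 c, (P c' - P c) * q c' = (c' - c) * -ψ (P c) :=
    hpos.mono fun c' hc' => sub_mul_one_add_mul_dslope_eq (hP c hc) (hP c' hc')
  have hq_ge : ∀ᶠ c' in 𝓝 c, 1 ≤ q c' :=
    hpos.mono fun c' hc' => le_add_of_nonneg_right (mul_nonneg hc'.le (hmono.dslope_nonneg _ _))
  have hPc : ContinuousAt P c := continuousAt_of_eventually_sub_mul_eq hq_ge hkey
  have hq : ContinuousAt q c := continuousAt_const.add <| continuousAt_id.mul <|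
    (continuousAt_dslope_same.2 (hψ (P c)).differentiableAt).comp hPc
  have hqc : q c = 1 + c * ψd (P c) := by simp only [q, dslope_same, (hψ (P c)).deriv]
  rw [← hqc]
  exact hasDerivAt_of_eventually_sub_mul_eq hq (by linarith [hq_ge.self_of_nhds]) hkey
end

section
/- Let 𝔖 be a p×p symmetric positive semidefinite matrix, v ∈ ℝᵖ, d ≥ 0, τ > 0, and 𝔖' = 𝔖 + d·vvᵀ. Then 0 ≤ tr((𝔖 + τI)⁻¹) − tr((𝔖' + τI)⁻¹) ≤ 1/τ. -/
/-!
With `A = 𝔖 + τ • 1` and `w = A⁻¹ v`, the Sherman–Morrison formula makes the trace difference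
equal to `d ‖w‖² / (1 + d vᵀw)`. Since `vᵀw = wᵀ A w ≥ τ ‖w‖² ≥ 0`, this lies in `[0, 1/τ]`.
-/

open Matrix

namespace Matrix

variable {n K : Type*} [Fintype n] [DecidableEq n] [Field K]

theorem inv_add_smul_vecMulVec {A : Matrix n n K} (hA : IsUnit A.det) (d : K) (u v : n → K)
    (h : 1 + d * (v ⬝ᵥ A⁻¹ *ᵥ u) ≠ 0) :
    (A + d • vecMulVec u v)⁻¹ =
      A⁻¹ - (d / (1 + d * (v ⬝ᵥ A⁻¹ *ᵥ u))) • vecMulVec (A⁻¹ *ᵥ u) (v ᵥ* A⁻¹) := by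
  have hAA : A * A⁻¹ = 1 := mul_nonsing_inv A hA
  refine inv_eq_right_inv ?_
  rw [add_mul, mul_sub, mul_sub, hAA, Matrix.mul_smul, mul_vecMulVec, mulVec_mulVec, hAA,
    one_mulVec, smul_mul, smul_mul, vecMulVec_mul, Matrix.mul_smul, vecMulVec_mul_vecMulVec,
    vecMulVec_smul]
  match_scalars
  · ring
  · field_simp
    ring

theorem trace_inv_sub_trace_inv_add_smul_vecMulVec {A : Matrix n n K} (hA : IsUnit A.det)
    (d : K) (u v : n → K) (h : 1 + d * (v ⬝ᵥ A⁻¹ *ᵥ u) ≠ 0) :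
    trace A⁻¹ - trace (A + d • vecMulVec u v)⁻¹ =
      d / (1 + d * (v ⬝ᵥ A⁻¹ *ᵥ u)) * ((A⁻¹ *ᵥ u) ⬝ᵥ (v ᵥ* A⁻¹)) := by
  rw [inv_add_smul_vecMulVec hA d u v h, trace_sub, trace_smul, trace_vecMulVec, smul_eq_mul,
    sub_sub_cancel]

theorem PosSemidef.mul_dotProduct_self_le {S : Matrix n n ℝ} (hS : S.PosSemidef) (τ : ℝ)
    (w : n → ℝ) : τ * (w ⬝ᵥ w) ≤ w ⬝ᵥ (S + τ • 1) *ᵥ w := by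
  have hSw : 0 ≤ w ⬝ᵥ S *ᵥ w := by
    simpa only [star_trivial] using hS.dotProduct_mulVec_nonneg w
  rw [add_mulVec, dotProduct_add, smul_mulVec, one_mulVec, dotProduct_smul, smul_eq_mul]
  linarith

end Matrix

/-- Rank-one update trace bound: for PSD `𝔖`, `d ≥ 0`, `τ > 0`, and
`𝔖' = 𝔖 + d·vvᵀ`, we have `0 ≤ tr((𝔖+τI)⁻¹) - tr((𝔖'+τI)⁻¹) ≤ 1/τ`. -/
theorem stmt15 (p : ℕ)
    (𝔖 : Matrix (Fin p) (Fin p) ℝ) (h𝔖 : 𝔖.PosSemidef)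
    (v : Fin p → ℝ) (d τ : ℝ) (hd : 0 ≤ d) (hτ : 0 < τ) :
    0 ≤ ((𝔖 + τ • 1)⁻¹).trace -
        ((𝔖 + d • Matrix.vecMulVec v v + τ • 1)⁻¹).trace ∧
    ((𝔖 + τ • 1)⁻¹).trace -
        ((𝔖 + d • Matrix.vecMulVec v v + τ • 1)⁻¹).trace ≤ 1 / τ := by
  set A := 𝔖 + τ • (1 : Matrix (Fin p) (Fin p) ℝ)
  have hA : A.PosDef := PosDef.posSemidef_add h𝔖 (PosDef.one.smul hτ)
  have hAdet : IsUnit A.det := isUnit_iff_ne_zero.mpr hA.det_pos.ne'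
  set w := A⁻¹ *ᵥ v
  have hvw : v ᵥ* A⁻¹ = w := by
    have hsymm : A⁻¹ᵀ = A⁻¹ := by simpa using hA.inv.isHermitian.eq
    rw [← hsymm, vecMul_transpose]
  have hs : 0 ≤ v ⬝ᵥ w := by simpa using hA.inv.posSemidef.dotProduct_mulVec_nonneg v
  have hAw : A *ᵥ w = v := by rw [mulVec_mulVec, mul_nonsing_inv A hAdet, one_mulVec]
  have hw : τ * (w ⬝ᵥ w) ≤ v ⬝ᵥ w := by
    simpa [← hAw, dotProduct_comm] using h𝔖.mul_dotProduct_self_le τ w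
  have hden : 0 < 1 + d * (v ⬝ᵥ w) :=
    add_pos_of_pos_of_nonneg one_pos (mul_nonneg hd hs)
  rw [add_right_comm, trace_inv_sub_trace_inv_add_smul_vecMulVec hAdet d v v hden.ne', hvw]
  refine ⟨mul_nonneg (div_nonneg hd hden.le) (dotProduct_star_self_nonneg w), ?_⟩
  rw [div_mul_eq_mul_div, div_le_div_iff₀ hden hτ]
  linarith [mul_le_mul_of_nonneg_left hw hd]
end

section
/- Let S be a symmetric p×p PSD matrix written in block form S = [[Γ, v],[vᵀ, a]] where Γ is (p−1)×(p−1) PSD, v ∈ ℝ^{p−1}, a ≥ 0, and τ > 0. Then |tr((S + τI_p)⁻¹) − tr((Γ + τI_{p−1})⁻¹)| ≤ (1 + a/τ)/τ. -/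
/-!
With `A = Γ + τ • 1` and `y = A⁻¹ v`, the Schur complement formula for the inverse of the block
matrix `S + τ • 1` gives `tr((S + τ • 1)⁻¹) - tr(A⁻¹) = (1 + y ⬝ᵥ y) / (a + τ - v ⬝ᵥ y)`.
Testing the positive semidefinite `S` on the vector `(-y, 1)` yields `a - v ⬝ᵥ y ≥ τ (y ⬝ᵥ y)`,
so the denominator is at least `τ (1 + y ⬝ᵥ y)` and the difference lies in `[0, 1/τ]`.
-/

open Matrix

namespace Matrix

theorem trace_fromBlocks {R l m : Type*} [AddCommMonoid R] [Fintype l] [Fintype m]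
    (A : Matrix l l R) (B : Matrix l m R) (C : Matrix m l R) (D : Matrix m m R) :
    (fromBlocks A B C D).trace = A.trace + D.trace := by
  simp [trace, Fintype.sum_sum_type]

theorem trace_inv_fromBlocks_replicateCol_replicateRow {K n : Type*} [Field K] [Fintype n]
    [DecidableEq n] {A : Matrix n n K} (hA : IsUnit A.det) (u w : n → K) (d : K)
    (hs : d - w ⬝ᵥ A⁻¹ *ᵥ u ≠ 0) :
    (fromBlocks A (replicateCol Unit u) (replicateRow Unit w) (of fun _ _ => d))⁻¹.trace =
      A⁻¹.trace + (1 + (w ᵥ* A⁻¹) ⬝ᵥ (A⁻¹ *ᵥ u)) / (d - w ⬝ᵥ A⁻¹ *ᵥ u) := by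
  let := A.invertibleOfIsUnitDet hA
  set s := d - w ⬝ᵥ A⁻¹ *ᵥ u
  have hschur : (of fun _ _ => d : Matrix Unit Unit K) -
      replicateRow Unit w * ⅟A * replicateCol Unit u = s • 1 := by
    rw [invOf_eq_nonsing_inv, Matrix.mul_assoc, ← replicateCol_mulVec,
      replicateRow_mul_replicateCol]
    ext
    simp [s]
  let : Invertible ((of fun _ _ => d : Matrix Unit Unit K) -
      replicateRow Unit w * ⅟A * replicateCol Unit u) :=
    invertibleOfIsUnitDet _ (by rw [hschur]; simp [hs])
  have hschur_inv : ⅟((of fun _ _ => d : Matrix Unit Unit K) -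
      replicateRow Unit w * ⅟A * replicateCol Unit u) = s⁻¹ • 1 :=
    invOf_eq_right_inv (by rw [hschur, smul_mul_smul, Matrix.mul_one, mul_inv_cancel₀ hs, one_smul])
  let := fromBlocks₁₁Invertible A (replicateCol Unit u) (replicateRow Unit w) (of fun _ _ => d)
  rw [← invOf_eq_nonsing_inv, invOf_fromBlocks₁₁_eq, trace_fromBlocks, trace_add, hschur_inv,
    invOf_eq_nonsing_inv, ← replicateCol_mulVec, Matrix.mul_assoc _ _ A⁻¹, ← replicateRow_vecMul]
  simp [trace_smul, dotProduct_comm (A⁻¹ *ᵥ u)]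
  ring

theorem PosSemidef.fromBlocks_replicate_quadForm_nonneg {R n : Type*} [CommRing R]
    [PartialOrder R] [StarRing R] [TrivialStar R] [Fintype n] {Γ : Matrix n n R} {v : n → R}
    {a : R}
    (hS : (fromBlocks Γ (replicateCol Unit v) (replicateRow Unit v) (of fun _ _ => a)).PosSemidef)
    (y : n → R) : 0 ≤ y ⬝ᵥ Γ *ᵥ y - 2 * (v ⬝ᵥ y) + a := by
  have h := hS.dotProduct_mulVec_nonneg (Sum.elim (-y) 1)
  rw [fromBlocks_mulVec, star_trivial, sumElim_dotProduct_sumElim] at h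
  convert h using 1
  simp only [dotProduct, mulVec, mul_comm (y _), Pi.neg_apply, Sum.elim_comp_inl, replicateCol,
    Sum.elim_comp_inr, Pi.add_apply, mul_neg, Finset.sum_neg_distrib, Finset.univ_unique,
    PUnit.default_eq_unit, of_apply, Pi.one_apply, mul_one, Finset.sum_const,
    Finset.card_singleton, one_smul, mul_add, neg_mul, neg_neg, Finset.sum_add_distrib,
    replicateRow, one_mul, smul_add, smul_neg]
  ring

theorem abs_trace_inv_add_smul_one_fromBlocks_sub_le {n : Type*} [Fintype n] [DecidableEq n]
    {Γ : Matrix n n ℝ} {v : n → ℝ} {a τ : ℝ} (hτ : 0 < τ)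
    (hS : (fromBlocks Γ (replicateCol Unit v) (replicateRow Unit v) (of fun _ _ => a)).PosSemidef) :
    |((fromBlocks Γ (replicateCol Unit v) (replicateRow Unit v) (of fun _ _ => a) + τ • 1)⁻¹).trace
      - (Γ + τ • 1)⁻¹.trace| ≤ τ⁻¹ := by
  set A := Γ + τ • 1
  have hΓ : Γ.PosSemidef := hS.submatrix Sum.inl
  have hA : A.PosDef := PosDef.posSemidef_add hΓ (PosDef.one.smul hτ)
  set y := A⁻¹ *ᵥ v
  have hAy : A *ᵥ y = v := by
    rw [mulVec_mulVec, mul_nonsing_inv _ hA.det_pos.ne'.isUnit, one_mulVec]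
  have hvy : v ᵥ* A⁻¹ = y := by
    rw [← mulVec_transpose, ← conjTranspose_eq_transpose_of_trivial, hA.inv.isHermitian.eq]
  have hkey : τ * (y ⬝ᵥ y) ≤ a - v ⬝ᵥ y := by
    have hquad := hS.fromBlocks_replicate_quadForm_nonneg y
    have hAquad : y ⬝ᵥ Γ *ᵥ y + τ * (y ⬝ᵥ y) = v ⬝ᵥ y := by
      rw [← hAy, dotProduct_comm]
      simp only [A, add_mulVec, add_dotProduct, smul_mulVec, one_mulVec, smul_dotProduct,
        smul_eq_mul, dotProduct_comm y]
    linarith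
  have hshift : fromBlocks Γ (replicateCol Unit v) (replicateRow Unit v) (of fun _ _ => a) + τ • 1
      = fromBlocks A (replicateCol Unit v) (replicateRow Unit v) (of fun _ _ => a + τ) := by
    rw [← fromBlocks_one, fromBlocks_smul, fromBlocks_add]
    congr 1 <;> ext <;> simp
  have hy : 0 ≤ y ⬝ᵥ y := dotProduct_star_self_nonneg y
  have hs : τ * (1 + y ⬝ᵥ y) ≤ a + τ - v ⬝ᵥ y := by linarith
  have hs_pos : 0 < a + τ - v ⬝ᵥ y := by nlinarith
  rw [hshift, trace_inv_fromBlocks_replicateCol_replicateRow hA.det_pos.ne'.isUnit v v (a + τ)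
    hs_pos.ne', hvy, add_sub_cancel_left, abs_of_nonneg (by positivity), div_le_iff₀ hs_pos]
  calc 1 + y ⬝ᵥ y = τ⁻¹ * (τ * (1 + y ⬝ᵥ y)) := by field_simp
    _ ≤ τ⁻¹ * (a + τ - v ⬝ᵥ y) := by gcongr

end Matrix

/-- Block-matrix trace perturbation bound: if the PSD matrix `S` has block form
`[[Γ, v],[vᵀ, a]]` with `a ≥ 0` and `τ > 0`, then
`|tr((S+τI)⁻¹) - tr((Γ+τI)⁻¹)| ≤ (1 + a/τ)/τ`. -/
theorem stmt16 (m : ℕ)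
    (Γ : Matrix (Fin m) (Fin m) ℝ) (v : Fin m → ℝ) (a τ : ℝ)
    (ha : 0 ≤ a) (hτ : 0 < τ)
    (S : Matrix (Fin m ⊕ Unit) (Fin m ⊕ Unit) ℝ)
    (hSdef : S = Matrix.fromBlocks Γ
      (Matrix.of fun i (_ : Unit) => v i)
      (Matrix.of fun (_ : Unit) j => v j)
      (Matrix.of fun (_ : Unit) (_ : Unit) => a))
    (hS : S.PosSemidef) :
    |((S + τ • 1)⁻¹).trace - ((Γ + τ • 1)⁻¹).trace| ≤ (1 + a / τ) / τ := by
  subst hSdef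
  calc _ ≤ τ⁻¹ := abs_trace_inv_add_smul_one_fromBlocks_sub_le hτ hS
    _ ≤ (1 + a / τ) / τ := by
      rw [inv_eq_one_div]
      gcongr
      exact le_add_of_nonneg_right (div_nonneg ha hτ.le)
end

section
/- Let ρ: ℝ → ℝ be convex and twice differentiable with ψ = ρ' such that ψ' is L-Lipschitz and ‖ψ‖_∞ < ∞. Then for all u ∈ ℝ and all c₁, c₂ ≥ 0, |ψ'(prox(c₁ρ)(u)) − ψ'(prox(c₂ρ)(u))| ≤ min(L·‖ψ‖_∞·|c₁ − c₂|, 2‖ψ'‖_∞). -/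
/-! Convexity of `ρ` makes `ψ = ρ'` monotone. If `y₁ ≥ y₂` solve `yᵢ + cᵢ ψ(yᵢ) = u`, then
`y₁ - y₂ = (c₂ - c₁) ψ(y₂) - c₁ (ψ(y₁) - ψ(y₂)) ≤ ‖ψ‖_∞ |c₁ - c₂|`, so the proximal point moves
by at most `‖ψ‖_∞ |c₁ - c₂|`; composing with the `L`-Lipschitz `ψ'` gives the first bound, and
`|ψ'| ≤ ‖ψ'‖_∞` at both points gives the second. -/

lemma ConvexOn.monotone_of_hasDerivAt_s17 {f f' : ℝ → ℝ} (hf : ConvexOn ℝ Set.univ f)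
    (hf' : ∀ x, HasDerivAt f (f' x) x) : Monotone f' := by
  have hderiv : deriv f = f' := funext fun x => (hf' x).deriv
  rw [← hderiv, ← monotoneOn_univ]
  exact hf.monotoneOn_deriv fun x _ => (hf' x).differentiableAt

lemma abs_sub_le_of_add_mul_eq_add_mul {ψ : ℝ → ℝ} (hψ : Monotone ψ) {M : ℝ}
    (hM : ∀ t, |ψ t| ≤ M) {c₁ c₂ y₁ y₂ : ℝ} (hc₁ : 0 ≤ c₁) (hc₂ : 0 ≤ c₂)
    (h : y₁ + c₁ * ψ y₁ = y₂ + c₂ * ψ y₂) : |y₁ - y₂| ≤ M * |c₁ - c₂| := by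
  wlog hle : y₂ ≤ y₁ generalizing c₁ c₂ y₁ y₂
  · rw [abs_sub_comm, abs_sub_comm c₁]
    exact this hc₂ hc₁ h.symm (le_of_not_ge hle)
  rw [abs_of_nonneg (sub_nonneg.2 hle)]
  have hmono : c₁ * (ψ y₂ - ψ y₁) ≤ 0 :=
    mul_nonpos_of_nonneg_of_nonpos hc₁ (sub_nonpos.2 (hψ hle))
  have hbound : (c₂ - c₁) * ψ y₂ ≤ M * |c₁ - c₂| :=
    calc (c₂ - c₁) * ψ y₂ ≤ |c₂ - c₁| * |ψ y₂| := (le_abs_self _).trans (abs_mul _ _).le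
      _ ≤ |c₁ - c₂| * M := by rw [abs_sub_comm]; gcongr; exact hM _
      _ = M * |c₁ - c₂| := mul_comm _ _
  linarith

theorem stmt17_general (ρ ψ ψd : ℝ → ℝ)
    (hconv : ConvexOn ℝ Set.univ ρ)
    (hρ : ∀ t, HasDerivAt ρ (ψ t) t)
    (L : NNReal) (hLip : LipschitzWith L ψd)
    (Mψ Mψd : ℝ)
    (hMψ : ∀ t, |ψ t| ≤ Mψ) (hMψd : ∀ t, |ψd t| ≤ Mψd) :
    ∀ u c₁ c₂ : ℝ, 0 ≤ c₁ → 0 ≤ c₂ →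
      ∀ y₁ y₂ : ℝ, y₁ + c₁ * ψ y₁ = u → y₂ + c₂ * ψ y₂ = u →
        |ψd y₁ - ψd y₂| ≤ min ((L : ℝ) * Mψ * |c₁ - c₂|) (2 * Mψd) := by
  intro u c₁ c₂ hc₁ hc₂ y₁ y₂ h₁ h₂
  have hy : |y₁ - y₂| ≤ Mψ * |c₁ - c₂| :=
    abs_sub_le_of_add_mul_eq_add_mul (hconv.monotone_of_hasDerivAt_s17 hρ) hMψ hc₁ hc₂
      (h₁.trans h₂.symm)
  refine le_min ?_ ?_
  · calc |ψd y₁ - ψd y₂| ≤ L * |y₁ - y₂| := by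
          simpa only [Real.dist_eq] using hLip.dist_le_mul y₁ y₂
      _ ≤ L * (Mψ * |c₁ - c₂|) := by gcongr
      _ = L * Mψ * |c₁ - c₂| := (mul_assoc _ _ _).symm
  · calc |ψd y₁ - ψd y₂| ≤ |ψd y₁| + |ψd y₂| := abs_sub _ _
      _ ≤ 2 * Mψd := by linarith [hMψd y₁, hMψd y₂]

/-- Lipschitz bound on `c ↦ ψ'(prox(cρ)(u))`: if `ψ'` is `L`-Lipschitz,
`|ψ| ≤ Mψ` and `|ψ'| ≤ Mψd`, then for `c₁, c₂ ≥ 0` and solutions `yᵢ` of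
`y + cᵢψ(y) = u`, `|ψ'(y₁) - ψ'(y₂)| ≤ min(L·Mψ·|c₁-c₂|, 2·Mψd)`. -/
theorem stmt17 (ρ ψ ψd : ℝ → ℝ)
    (hconv : ConvexOn ℝ Set.univ ρ)
    (hρ : ∀ t, HasDerivAt ρ (ψ t) t)
    (hψ : ∀ t, HasDerivAt ψ (ψd t) t)
    (L : NNReal) (hLip : LipschitzWith L ψd)
    (Mψ Mψd : ℝ)
    (hMψ : ∀ t, |ψ t| ≤ Mψ) (hMψd : ∀ t, |ψd t| ≤ Mψd) :
    ∀ u c₁ c₂ : ℝ, 0 ≤ c₁ → 0 ≤ c₂ →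
      ∀ y₁ y₂ : ℝ, y₁ + c₁ * ψ y₁ = u → y₂ + c₂ * ψ y₂ = u →
        |ψd y₁ - ψd y₂| ≤ min ((L : ℝ) * Mψ * |c₁ - c₂|) (2 * Mψd) :=
  stmt17_general ρ ψ ψd hconv hρ L hLip Mψ Mψd hMψ hMψd
end

section
/- Fix B > 0, λ ∈ ℝ, and let ρ: ℝ → ℝ be convex twice differentiable with ψ = ρ', ψ' L-Lipschitz, ‖ψ‖_∞ < ∞, ‖ψ'‖_∞ < ∞. Define h_u(x) = 1/(1 + xλ²ψ'(prox(xλ²ρ)(u))) for x ≥ 0. Then for all u ∈ ℝ and all 0 ≤ x, y ≤ B with |x − y| ≤ η, |h_u(x) − h_u(y)| ≤ η(λ²‖ψ'‖_∞ + B·L·λ⁴·‖ψ‖_∞). -/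
/-!
Write `p = prox(xλ²ρ)(u)` and `q = prox(yλ²ρ)(u)`. Subtracting the two prox equations gives
`(p - q) + xλ²(ψ p - ψ q) = (y - x)λ² ψ q`; since `ψ` is nondecreasing the two summands on the left
have the same sign, so `|p - q| ≤ |x - y| λ² ‖ψ‖_∞`. The map `a ↦ 1/(1 + a)` is 1-Lipschitz on
`[0, ∞)`, and splitting `xλ²ψ'(p) - yλ²ψ'(q)` into a change of the factor `x` and a change of the
argument of `ψ'` (controlled by the Lipschitz bound on `ψ'`) gives the estimate.
-/

lemma abs_one_div_one_add_sub_one_div_one_add_le {a b : ℝ} (ha : 0 ≤ a) (hb : 0 ≤ b) :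
    |1 / (1 + a) - 1 / (1 + b)| ≤ |a - b| := by
  have hab : 0 < (1 + a) * (1 + b) := by positivity
  rw [div_sub_div _ _ (by positivity) (by positivity), abs_div, abs_of_pos hab, abs_sub_comm a b]
  refine div_le_self (abs_nonneg _) ?_ |>.trans_eq (by ring_nf)
  nlinarith

lemma Monotone.abs_sub_le_of_add_mul_eq {ψ : ℝ → ℝ} (hψ : Monotone ψ) {s t p q u : ℝ}
    (hs : 0 ≤ s) (hp : p + s * ψ p = u) (hq : q + t * ψ q = u) :
    |p - q| ≤ |s - t| * |ψ q| := by
  have hsign : 0 ≤ (p - q) * (ψ p - ψ q) := (monotone_id.monovary hψ).sub_mul_sub_nonneg q p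
  have hdiff : p - q + s * (ψ p - ψ q) = (t - s) * ψ q := by linear_combination hp - hq
  have hsq : (p - q) ^ 2 ≤ ((t - s) * ψ q) ^ 2 := by
    rw [← hdiff]
    nlinarith [mul_nonneg hs hsign, sq_nonneg (s * (ψ p - ψ q))]
  simpa only [abs_mul, abs_sub_comm t s] using sq_le_sq.1 hsq

lemma abs_mul_sub_mul_le (s t a b : ℝ) (ht : 0 ≤ t) :
    |s * a - t * b| ≤ |s - t| * |a| + t * |a - b| := by
  calc |s * a - t * b| = |(s - t) * a + t * (a - b)| := by ring_nf
    _ ≤ |s - t| * |a| + t * |a - b| :=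
      (abs_add_le _ _).trans_eq (by rw [abs_mul, abs_mul, abs_of_nonneg ht])

theorem stmt18_general (ψ ψd : ℝ → ℝ)
    (hψ : ∀ t, HasDerivAt ψ (ψd t) t)
    (hψd_nonneg : ∀ t, 0 ≤ ψd t)
    (L : NNReal) (hLip : LipschitzWith L ψd)
    (Mψ Mψd : ℝ)
    (hMψ : ∀ t, |ψ t| ≤ Mψ) (hMψd : ∀ t, |ψd t| ≤ Mψd)
    (B η lam : ℝ)
    (P : ℝ → ℝ → ℝ)
    (hP : ∀ x u : ℝ, 0 ≤ x → P x u + x * lam ^ 2 * ψ (P x u) = u) :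
    ∀ u x y : ℝ, 0 ≤ x → x ≤ B → 0 ≤ y → y ≤ B → |x - y| ≤ η →
      |1 / (1 + x * lam ^ 2 * ψd (P x u)) - 1 / (1 + y * lam ^ 2 * ψd (P y u))|
        ≤ η * (lam ^ 2 * Mψd + B * (L : ℝ) * lam ^ 4 * Mψ) := by
  intro u x y hx hxB hy hyB hxy
  have hη : 0 ≤ η := (abs_nonneg _).trans hxy
  have hB : 0 ≤ B := hy.trans hyB
  have hscale : |x * lam ^ 2 - y * lam ^ 2| = |x - y| * lam ^ 2 := by
    rw [← sub_mul, abs_mul, abs_of_nonneg (sq_nonneg lam)]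
  have hprox : |P x u - P y u| ≤ η * lam ^ 2 * Mψ :=
    calc |P x u - P y u| ≤ |x * lam ^ 2 - y * lam ^ 2| * |ψ (P y u)| :=
          (monotone_of_hasDerivAt_nonneg hψ hψd_nonneg).abs_sub_le_of_add_mul_eq
            (by positivity) (hP x u hx) (hP y u hy)
      _ ≤ η * lam ^ 2 * Mψ := by rw [hscale]; gcongr; exact hMψ _
  have hψd : |ψd (P x u) - ψd (P y u)| ≤ L * (η * lam ^ 2 * Mψ) := by
    simpa only [Real.dist_eq] using
      (hLip.dist_le_mul _ _).trans (by rw [Real.dist_eq]; gcongr)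
  calc _ ≤ |x * lam ^ 2 * ψd (P x u) - y * lam ^ 2 * ψd (P y u)| :=
        abs_one_div_one_add_sub_one_div_one_add_le
          (by have := hψd_nonneg (P x u); positivity) (by have := hψd_nonneg (P y u); positivity)
    _ ≤ |x * lam ^ 2 - y * lam ^ 2| * |ψd (P x u)|
          + y * lam ^ 2 * |ψd (P x u) - ψd (P y u)| := abs_mul_sub_mul_le _ _ _ _ (by positivity)
    _ ≤ η * lam ^ 2 * Mψd + B * lam ^ 2 * (L * (η * lam ^ 2 * Mψ)) := by
        rw [hscale]; gcongr
        · exact hMψd _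
    _ = η * (lam ^ 2 * Mψd + B * (L : ℝ) * lam ^ 4 * Mψ) := by ring

/-- Equicontinuity bound for `h_u(x) = 1/(1 + xλ²ψ'(prox(xλ²ρ)(u)))`:
for `0 ≤ x, y ≤ B` with `|x - y| ≤ η`,
`|h_u(x) - h_u(y)| ≤ η(λ²‖ψ'‖_∞ + B·L·λ⁴·‖ψ‖_∞)`. -/
theorem stmt18 (ρ ψ ψd : ℝ → ℝ)
    (hconv : ConvexOn ℝ Set.univ ρ)
    (hρ : ∀ t, HasDerivAt ρ (ψ t) t)
    (hψ : ∀ t, HasDerivAt ψ (ψd t) t)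
    (hψd_nonneg : ∀ t, 0 ≤ ψd t)
    (L : NNReal) (hLip : LipschitzWith L ψd)
    (Mψ Mψd : ℝ)
    (hMψ : ∀ t, |ψ t| ≤ Mψ) (hMψd : ∀ t, |ψd t| ≤ Mψd)
    (B η lam : ℝ) (hB : 0 < B)
    (P : ℝ → ℝ → ℝ)
    (hP : ∀ x u : ℝ, 0 ≤ x → P x u + x * lam ^ 2 * ψ (P x u) = u) :
    ∀ u x y : ℝ, 0 ≤ x → x ≤ B → 0 ≤ y → y ≤ B → |x - y| ≤ η →
      |1 / (1 + x * lam ^ 2 * ψd (P x u)) - 1 / (1 + y * lam ^ 2 * ψd (P y u))|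
        ≤ η * (lam ^ 2 * Mψd + B * (L : ℝ) * lam ^ 4 * Mψ) :=
  stmt18_general ψ ψd hψ hψd_nonneg L hLip Mψ Mψd hMψ hMψd B η lam P hP
end

section
/- Let W be a square-integrable function of n independent random variables Z₁,…,Zₙ, and for each i let W_{(i)} be any square-integrable function of (Z_j)_{j≠i}. Then Var(W) ≤ Σ_{i=1}^n E[(W − W_{(i)})²]. -/
/-!
Let `ℱₖ` be generated by `Z₀, …, Z_{k-1}`. The Doob martingale `E[W | ℱₖ]` runs from `E W`
to `W` and its increments `Δₖ` are orthogonal in `L²`, so `Var W = ∑ₖ E[Δₖ²]`. Since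
`W_{(k)}` does not depend on `Z_k`, which is independent of the other coordinates,
conditioning `W_{(k)}` on `ℱ_{k+1}` gives the same as conditioning on `ℱₖ`. Hence `Δₖ` is
also the increment of the Doob martingale of `W - W_{(k)}`, and such an increment has second
moment at most `E[(W - W_{(k)})²]`.
-/

open MeasureTheory ProbabilityTheory

section SquareIntegrable

variable {Ω : Type*} {m m₁ m₂ : MeasurableSpace Ω} [m₀ : MeasurableSpace Ω]
  {μ : Measure Ω} {X Y : Ω → ℝ}

theorem integral_sq_sub_condExp [IsFiniteMeasure μ] (hm : m ≤ m₀) (hX : MemLp X 2 μ) :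
    ∫ ω, (X ω - μ[X | m] ω) ^ 2 ∂μ = ∫ ω, X ω ^ 2 ∂μ - ∫ ω, μ[X | m] ω ^ 2 ∂μ :=
  calc ∫ ω, (X ω - μ[X | m] ω) ^ 2 ∂μ
      = ∫ ω, Var[X; μ | m] ω ∂μ := (integral_condExp hm).symm
    _ = ∫ ω, (μ[X ^ 2 | m] - μ[X | m] ^ 2 : Ω → ℝ) ω ∂μ :=
      integral_congr_ae (condVar_ae_eq_condExp_sq_sub_sq_condExp hm hX)
    _ = ∫ ω, μ[X ^ 2 | m] ω ∂μ - ∫ ω, μ[X | m] ω ^ 2 ∂μ :=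
      integral_sub integrable_condExp (hX.condExp one_le_two).integrable_sq
    _ = ∫ ω, X ω ^ 2 ∂μ - ∫ ω, μ[X | m] ω ^ 2 ∂μ := by
      rw [integral_condExp hm]
      rfl

theorem integral_sq_condExp_le [IsFiniteMeasure μ] (hm : m ≤ m₀) (hX : MemLp X 2 μ) :
    ∫ ω, μ[X | m] ω ^ 2 ∂μ ≤ ∫ ω, X ω ^ 2 ∂μ := by
  have hpyth := integral_sq_sub_condExp hm hX
  have hnonneg : 0 ≤ ∫ ω, (X ω - μ[X | m] ω) ^ 2 ∂μ := integral_nonneg fun _ => sq_nonneg _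
  linarith

theorem integral_sq_condExp_sub_condExp [IsFiniteMeasure μ] (h₁₂ : m₁ ≤ m₂) (h₂ : m₂ ≤ m₀)
    (hX : MemLp X 2 μ) :
    ∫ ω, (μ[X | m₂] ω - μ[X | m₁] ω) ^ 2 ∂μ
      = ∫ ω, μ[X | m₂] ω ^ 2 ∂μ - ∫ ω, μ[X | m₁] ω ^ 2 ∂μ := by
  have htower : μ[μ[X | m₂] | m₁] =ᵐ[μ] μ[X | m₁] := condExp_condExp_of_le h₁₂ h₂
  calc ∫ ω, (μ[X | m₂] ω - μ[X | m₁] ω) ^ 2 ∂μ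
      = ∫ ω, (μ[X | m₂] ω - μ[μ[X | m₂] | m₁] ω) ^ 2 ∂μ := by
        refine integral_congr_ae ?_
        filter_upwards [htower] with ω h
        rw [h]
    _ = ∫ ω, μ[X | m₂] ω ^ 2 ∂μ - ∫ ω, μ[μ[X | m₂] | m₁] ω ^ 2 ∂μ :=
        integral_sq_sub_condExp (h₁₂.trans h₂) (hX.condExp one_le_two)
    _ = ∫ ω, μ[X | m₂] ω ^ 2 ∂μ - ∫ ω, μ[X | m₁] ω ^ 2 ∂μ := by
        congr 1
        exact integral_congr_ae (htower.fun_comp (· ^ 2))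

theorem integral_sq_condExp_sub_condExp_le [IsFiniteMeasure μ] (h₁₂ : m₁ ≤ m₂)
    (h₂ : m₂ ≤ m₀) (hX : MemLp X 2 μ) (hY : MemLp Y 2 μ) (hYc : μ[Y | m₂] =ᵐ[μ] μ[Y | m₁]) :
    ∫ ω, (μ[X | m₂] ω - μ[X | m₁] ω) ^ 2 ∂μ ≤ ∫ ω, (X ω - Y ω) ^ 2 ∂μ := by
  have hsplit (m' : MeasurableSpace Ω) : μ[X | m'] =ᵐ[μ] μ[X - Y | m'] + μ[Y | m'] := by
    simpa using
      condExp_add ((hX.sub hY).integrable one_le_two) (hY.integrable one_le_two) m'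
  have hincr : (fun ω => (μ[X | m₂] ω - μ[X | m₁] ω) ^ 2)
      =ᵐ[μ] fun ω => (μ[X - Y | m₂] ω - μ[X - Y | m₁] ω) ^ 2 := by
    filter_upwards [hsplit m₂, hsplit m₁, hYc] with ω h₂ h₁ hY
    simp only [h₂, h₁, Pi.add_apply, hY, add_sub_add_right_eq_sub]
  calc ∫ ω, (μ[X | m₂] ω - μ[X | m₁] ω) ^ 2 ∂μ
      = ∫ ω, μ[X - Y | m₂] ω ^ 2 ∂μ - ∫ ω, μ[X - Y | m₁] ω ^ 2 ∂μ := by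
        rw [integral_congr_ae hincr, integral_sq_condExp_sub_condExp h₁₂ h₂ (hX.sub hY)]
    _ ≤ ∫ ω, μ[X - Y | m₂] ω ^ 2 ∂μ :=
        sub_le_self _ (integral_nonneg fun _ => sq_nonneg _)
    _ ≤ ∫ ω, (X ω - Y ω) ^ 2 ∂μ := integral_sq_condExp_le h₂ (hX.sub hY)

theorem variance_eq_sum_integral_sq_condExp_sub [IsProbabilityMeasure μ]
    (ℱ : Filtration ℕ m₀) (h₀ : ℱ 0 = ⊥) {n : ℕ} (hXn : StronglyMeasurable[ℱ n] X)
    (hX : MemLp X 2 μ) :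
    variance X μ
      = ∑ k ∈ Finset.range n, ∫ ω, (μ[X | ℱ (k + 1)] ω - μ[X | ℱ k] ω) ^ 2 ∂μ := by
  rw [Finset.sum_congr rfl fun k _ =>
      integral_sq_condExp_sub_condExp (ℱ.mono k.le_succ) (ℱ.le _) hX,
    Finset.sum_range_sub (fun k => ∫ ω, μ[X | ℱ k] ω ^ 2 ∂μ),
    condExp_of_stronglyMeasurable (ℱ.le n) hXn (hX.integrable one_le_two), h₀, condExp_bot,
    variance_eq_sub hX]
  simp

end SquareIntegrable

section GenerateFromInter

variable {Ω : Type*} {m₂ m₃ : MeasurableSpace Ω}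

theorem isPiSystem_image2_inter :
    IsPiSystem (Set.image2 (· ∩ ·) {s | MeasurableSet[m₂] s} {t | MeasurableSet[m₃] t}) := by
  rintro _ ⟨s, hs, t, ht, rfl⟩ _ ⟨s', hs', t', ht', rfl⟩ -
  exact ⟨s ∩ s', hs.inter hs', t ∩ t', ht.inter ht', Set.inter_inter_inter_comm s s' t t'⟩

theorem generateFrom_image2_inter :
    MeasurableSpace.generateFrom
      (Set.image2 (· ∩ ·) {s | MeasurableSet[m₂] s} {t | MeasurableSet[m₃] t}) = m₂ ⊔ m₃ := by
  refine le_antisymm (MeasurableSpace.generateFrom_le ?_)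
    (sup_le (fun s hs => ?_) fun t ht => ?_)
  · rintro _ ⟨s, hs, t, ht, rfl⟩
    exact (le_sup_left (b := m₃) s hs).inter (le_sup_right (a := m₂) t ht)
  · exact MeasurableSpace.measurableSet_generateFrom
      ⟨s, hs, Set.univ, .univ, Set.inter_univ s⟩
  · exact MeasurableSpace.measurableSet_generateFrom
      ⟨Set.univ, .univ, t, ht, Set.univ_inter t⟩

end GenerateFromInter

section Independence

variable {Ω : Type*} {m₁ m₂ m₃ : MeasurableSpace Ω} [m₀ : MeasurableSpace Ω]
  {μ : Measure Ω} [IsFiniteMeasure μ] {h : Ω → ℝ}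

theorem setIntegral_inter_eq_mul_of_indep (hm₁ : m₁ ≤ m₀) (hm₃ : m₃ ≤ m₀)
    (hind : Indep m₁ m₃ μ) (hh : StronglyMeasurable[m₁] h) (hhi : Integrable h μ)
    {s t : Set Ω} (hs : MeasurableSet[m₁] s) (ht : MeasurableSet[m₃] t) :
    ∫ ω in s ∩ t, h ω ∂μ = μ.real t * ∫ ω in s, h ω ∂μ :=
  calc ∫ ω in s ∩ t, h ω ∂μ = ∫ ω in t, s.indicator h ω ∂μ := by
        rw [setIntegral_indicator (hm₁ s hs), Set.inter_comm]
    _ = ∫ ω in t, μ[s.indicator h | m₃] ω ∂μ :=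
        (setIntegral_condExp hm₃ (hhi.indicator (hm₁ s hs)) ht).symm
    _ = ∫ _ in t, (∫ ω, s.indicator h ω ∂μ) ∂μ :=
        setIntegral_congr_ae (hm₃ t ht)
          ((condExp_indep_eq hm₁ hm₃ (hh.indicator hs) hind).mono fun _ h _ => h)
    _ = μ.real t * ∫ ω in s, h ω ∂μ := by
        rw [setIntegral_const, integral_indicator (hm₁ s hs), smul_eq_mul]

theorem condExp_sup_ae_eq_of_indep (hm₁ : m₁ ≤ m₀) (hm₃ : m₃ ≤ m₀) (h₂₁ : m₂ ≤ m₁)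
    (hind : Indep m₁ m₃ μ) (hh : StronglyMeasurable[m₁] h) (hhi : Integrable h μ) :
    μ[h | m₂ ⊔ m₃] =ᵐ[μ] μ[h | m₂] := by
  have hm₂ : m₂ ≤ m₀ := h₂₁.trans hm₁
  -- Over `s ∩ t` (`s ∈ m₂`, `t ∈ m₃`) independence splits off the factor `μ t` on both
  -- sides, and these sets form a π-system generating `m₂ ⊔ m₃`.
  have hset (v : Set Ω) (hv : MeasurableSet[m₂ ⊔ m₃] v) :
      ∫ ω in v, μ[h | m₂] ω ∂μ = ∫ ω in v, h ω ∂μ := by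
    induction v, hv using MeasurableSpace.induction_on_inter generateFrom_image2_inter.symm
      isPiSystem_image2_inter with
    | empty => simp
    | basic _ hv =>
      obtain ⟨s, hs, t, ht, rfl⟩ := hv
      rw [setIntegral_inter_eq_mul_of_indep hm₁ hm₃ hind hh hhi (h₂₁ s hs) ht,
        setIntegral_inter_eq_mul_of_indep hm₁ hm₃ hind (stronglyMeasurable_condExp.mono h₂₁)
          integrable_condExp (h₂₁ s hs) ht,
        setIntegral_condExp hm₂ hhi hs]
    | compl v hv ih =>
      rw [setIntegral_compl (sup_le hm₂ hm₃ v hv) integrable_condExp,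
        setIntegral_compl (sup_le hm₂ hm₃ v hv) hhi, ih, integral_condExp hm₂]
    | iUnion v hdisj hv ih =>
      have hv₀ (i : ℕ) : MeasurableSet (v i) := sup_le hm₂ hm₃ _ (hv i)
      rw [integral_iUnion hv₀ hdisj integrable_condExp.integrableOn,
        integral_iUnion hv₀ hdisj hhi.integrableOn]
      exact tsum_congr ih
  exact (ae_eq_condExp_of_forall_setIntegral_eq (sup_le hm₂ hm₃) hhi
    (fun _ _ _ => integrable_condExp.integrableOn) (fun v hv _ => hset v hv)
    (stronglyMeasurable_condExp.mono (le_sup_left : m₂ ≤ m₂ ⊔ m₃)).aestronglyMeasurable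
    ).symm

end Independence

section Coordinates

variable {Ω ι : Type*} {E : ι → Type*} [∀ i, MeasurableSpace (E i)]

theorem DependsOn.measurable_biSup_comap {β : Type*} [MeasurableSpace β] (Z : ∀ i, Ω → E i)
    {S : Set ι} {g : (∀ i, E i) → β} (hgS : DependsOn g S) (hg : Measurable g)
    (x₀ : ∀ i, E i) :
    Measurable[⨆ j ∈ S, MeasurableSpace.comap (Z j) inferInstance]
      fun ω => g fun j => Z j ω := by
  classical
  have hpiecewise :
      (fun ω => g fun j => Z j ω) = fun ω => g (S.piecewise (fun j => Z j ω) x₀) :=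
    funext fun ω => hgS fun j hj => (S.piecewise_eq_of_mem (fun j => Z j ω) x₀ hj).symm
  rw [hpiecewise]
  let : MeasurableSpace Ω := ⨆ j ∈ S, MeasurableSpace.comap (Z j) inferInstance
  refine hg.comp (measurable_pi_iff.mpr fun j => ?_)
  by_cases hj : j ∈ S
  · simp only [S.piecewise_eq_of_mem _ _ hj]
    exact Measurable.of_comap_le
      (le_iSup₂ (f := fun j (_ : j ∈ S) => MeasurableSpace.comap (Z j) inferInstance) j hj)
  · simp only [S.piecewise_eq_of_notMem _ _ hj]
    exact measurable_const

theorem ProbabilityTheory.iIndepFun.indep_biSup_compl_singleton [MeasurableSpace Ω]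
    {μ : Measure Ω} {Z : ∀ i, Ω → E i} (hZ : ∀ i, Measurable (Z i)) (hindep : iIndepFun Z μ)
    (i : ι) :
    Indep (⨆ j ∈ ({i}ᶜ : Set ι), MeasurableSpace.comap (Z j) inferInstance)
      (MeasurableSpace.comap (Z i) inferInstance) μ := by
  simpa [compl_compl] using
    indep_biSup_compl (fun j => (hZ j).comap_le) hindep.iIndep ({i}ᶜ : Set ι)

end Coordinates

section PrefixFiltration

variable {Ω : Type*} [m₀ : MeasurableSpace Ω] {n : ℕ} {E : Fin n → Type*}
  [∀ i, MeasurableSpace (E i)]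

def prefixFiltration (Z : ∀ i, Ω → E i) (hZ : ∀ i, Measurable (Z i)) : Filtration ℕ m₀ where
  seq k := ⨆ j ∈ {j : Fin n | (j : ℕ) < k}, MeasurableSpace.comap (Z j) inferInstance
  mono' _ _ hkl := biSup_mono fun _ hj => lt_of_lt_of_le hj hkl
  le' _ := iSup₂_le fun j _ => (hZ j).comap_le

variable (Z : ∀ i, Ω → E i) (hZ : ∀ i, Measurable (Z i))

theorem prefixFiltration_zero : prefixFiltration Z hZ 0 = ⊥ := by
  simp [prefixFiltration]

theorem prefixFiltration_succ (i : Fin n) :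
    prefixFiltration Z hZ (i + 1)
      = prefixFiltration Z hZ i ⊔ MeasurableSpace.comap (Z i) inferInstance := by
  have hset : {j : Fin n | (j : ℕ) < i + 1} = insert i {j : Fin n | (j : ℕ) < i} := by
    ext j
    simp [le_iff_eq_or_lt, Fin.val_inj]
  simp only [prefixFiltration, hset, iSup_insert]
  exact sup_comm _ _

theorem prefixFiltration_le_biSup_compl_singleton (i : Fin n) :
    prefixFiltration Z hZ i
      ≤ ⨆ j ∈ ({i}ᶜ : Set (Fin n)), MeasurableSpace.comap (Z j) inferInstance :=
  biSup_mono fun _ hj => Fin.ne_of_lt hj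

end PrefixFiltration

/-- Efron–Stein inequality (weakened form): if `W` is a square-integrable
function of independent random variables `Z₁,…,Zₙ`, and each `W_{(i)}` is a
square-integrable function of all the `Z_j` except the `i`-th, then
`Var(W) ≤ Σᵢ E[(W - W_{(i)})²]`. -/
theorem stmt19 {Ω : Type*} [MeasurableSpace Ω] (μ : Measure Ω)
    [IsProbabilityMeasure μ]
    (n : ℕ) (E : Fin n → Type*) [∀ i, MeasurableSpace (E i)]
    (Z : ∀ i, Ω → E i) (hmeas : ∀ i, Measurable (Z i))
    (hindep : iIndepFun Z μ)
    (f : (∀ i, E i) → ℝ) (hf : Measurable f)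
    (g : Fin n → (∀ i, E i) → ℝ) (hg_meas : ∀ i, Measurable (g i))
    (hg : ∀ i : Fin n, ∀ a b : ∀ j, E j, (∀ j, j ≠ i → a j = b j) → g i a = g i b)
    (W : Ω → ℝ) (hW : W = fun ω => f fun i => Z i ω)
    (Wi : Fin n → Ω → ℝ) (hWi : ∀ i, Wi i = fun ω => g i fun j => Z j ω)
    (hW2 : MemLp W 2 μ) (hWi2 : ∀ i, MemLp (Wi i) 2 μ) :
    variance W μ ≤ ∑ i, ∫ ω, (W ω - Wi i ω) ^ 2 ∂μ := by
  obtain ⟨ω₀⟩ := nonempty_of_isProbabilityMeasure μ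
  set ℱ := prefixFiltration Z hmeas
  have hWℱ : StronglyMeasurable[ℱ n] W := by
    have hfn : DependsOn f {j : Fin n | (j : ℕ) < n} := fun a b hab =>
      congrArg f (funext fun j => hab j j.isLt)
    rw [hW]
    exact (hfn.measurable_biSup_comap Z hf fun j => Z j ω₀).stronglyMeasurable
  rw [variance_eq_sum_integral_sq_condExp_sub ℱ (prefixFiltration_zero Z hmeas) hWℱ hW2,
    Finset.sum_range]
  refine Finset.sum_le_sum fun i _ => ?_
  have hWi_meas : StronglyMeasurable[⨆ j ∈ ({i}ᶜ : Set (Fin n)),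
      MeasurableSpace.comap (Z j) inferInstance] (Wi i) := by
    rw [hWi i]
    exact (DependsOn.measurable_biSup_comap (S := {i}ᶜ) Z (hg i) (hg_meas i)
      fun j => Z j ω₀).stronglyMeasurable
  have hWi_fixed : μ[Wi i | ℱ (i + 1)] =ᵐ[μ] μ[Wi i | ℱ i] := by
    rw [prefixFiltration_succ]
    exact condExp_sup_ae_eq_of_indep (iSup₂_le fun j _ => (hmeas j).comap_le)
      (hmeas i).comap_le (prefixFiltration_le_biSup_compl_singleton Z hmeas i)
      (hindep.indep_biSup_compl_singleton hmeas i) hWi_meas ((hWi2 i).integrable one_le_two)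
  exact integral_sq_condExp_sub_condExp_le (ℱ.mono i.val.le_succ) (ℱ.le _) hW2 (hWi2 i)
    hWi_fixed
end
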